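/- Let E be a finite-dimensional real inner product space, D ⊆ E a linear subspace, W := ♭(D) ⊆ E*, γ : E* → E* the orthogonal projection onto W with respect to ⟪·,·⟫_*, Γ(q,p) := (q, γ(p)), and ω the canonical symplectic form on E × E*. For smooth f, g : E × W → ℝ define the Eden bracket {f,g}_E(m) := ω(X_{f∘Γ}(m), X_{g∘Γ}(m)) for m ∈ E × W, where X_F(x) is the unique element with ω(X_F(x),·) = DF(x). Then {·,·}_E is ℝ-bilinear, skew-symmetric ({g,f}_E = −{f,g}_E), and satisfies the Leibniz rule {f·f', g}_E = f·{f',g}_E + f'·{f,g}_E for all smooth f, f', g : E × W → ℝ; that is, {·,·}_E is an almost Poisson bracket. -/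

import Mathlib

open InnerProductSpace

/-- The canonical symplectic form on `E × E*`: `ω((v,α),(w,β)) = β(v) − α(w)`. -/
def canOmega (E : Type*) [NormedAddCommGroup E] [NormedSpace ℝ E] :
    (E × (E →L[ℝ] ℝ)) → (E × (E →L[ℝ] ℝ)) → ℝ :=
  fun x y => y.2 x.1 - x.2 y.1

/-- The inner product `⟪·,·⟫_*` induced on the dual `E*` by the musical isomorphism:
`⟪α,β⟫_* = ⟪♯α, ♯β⟫`. -/
noncomputable def dualInner {E : Type*} [NormedAddCommGroup E] [InnerProductSpace ℝ E]
    [FiniteDimensional ℝ E] (α β : E →L[ℝ] ℝ) : ℝ :=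
  inner ℝ ((InnerProductSpace.toDual ℝ E).symm α) ((InnerProductSpace.toDual ℝ E).symm β)

/-- The Eden bracket on `E × W`:
`{f,g}_E(m) := ω(X_{f∘Γ}(m), X_{g∘Γ}(m))`, with `Γ(q,p) = (q, γ(p))`. -/
noncomputable def edenBracket (E : Type*) [NormedAddCommGroup E] [InnerProductSpace ℝ E]
    [FiniteDimensional ℝ E] (W : Submodule ℝ (E →L[ℝ] ℝ))
    (γ : (E →L[ℝ] ℝ) → (E →L[ℝ] ℝ)) (hγW : ∀ α, γ α ∈ W)
    (XF : (E × (E →L[ℝ] ℝ) → ℝ) → E × (E →L[ℝ] ℝ) → E × (E →L[ℝ] ℝ))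
    (f g : E × ↥W → ℝ) (m : E × ↥W) : ℝ :=
  canOmega E
    (XF (fun x => f (x.1, ⟨γ x.2, hγW x.2⟩)) (m.1, ↑m.2))
    (XF (fun x => g (x.1, ⟨γ x.2, hγW x.2⟩)) (m.1, ↑m.2))

/-!
Positive definiteness of `⟪·,·⟫_*` makes the orthogonal projection unique: if `p, q ∈ W` and
`α - p`, `α - q` are orthogonal to `W`, then `p - q ∈ W` is orthogonal to itself. Hence `γ` is
linear and fixes `W`, so `f ∘ Γ` is differentiable for smooth `f` and agrees with `f` on `E × W`.
The defining property of `X_F` turns the bracket into the derivative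
`{f,g}_E(m) = D(f ∘ Γ)(m) (X_{g∘Γ}(m))`, which is linear in `f` and obeys the product rule;
skew-symmetry is that of `ω`, and it transfers linearity from `f` to `g`.
-/

namespace LinearMap.BilinForm

variable {R V : Type*} [CommRing R] [AddCommGroup V] [Module R V]
  {B : LinearMap.BilinForm R V} {W : Submodule R V} {γ : V → V}

theorem eq_of_sub_orthogonal (hB : ∀ x, B x x = 0 → x = 0) {α p q : V} (hp : p ∈ W)
    (hq : q ∈ W) (hpo : ∀ w ∈ W, B (α - p) w = 0) (hqo : ∀ w ∈ W, B (α - q) w = 0) :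
    p = q := by
  have hpq : p - q ∈ W := W.sub_mem hp hq
  refine sub_eq_zero.mp (hB _ ?_)
  calc B (p - q) (p - q) = B (α - q) (p - q) - B (α - p) (p - q) := by
        rw [← LinearMap.sub_apply, ← map_sub, sub_sub_sub_cancel_left]
    _ = 0 := by rw [hqo _ hpq, hpo _ hpq, sub_zero]

variable (hB : ∀ x, B x x = 0 → x = 0) (hγW : ∀ α, γ α ∈ W)
  (hγorth : ∀ α, ∀ w ∈ W, B (α - γ α) w = 0)
include hB hγW hγorth

theorem apply_eq_self_of_orthogonal {w : V} (hw : w ∈ W) : γ w = w :=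
  eq_of_sub_orthogonal hB (hγW w) hw (hγorth w) (by simp)

theorem isLinearMap_of_orthogonal : IsLinearMap R γ where
  map_add α β := eq_of_sub_orthogonal hB (hγW _) (W.add_mem (hγW α) (hγW β)) (hγorth _)
    fun w hw => by
      rw [show α + β - (γ α + γ β) = (α - γ α) + (β - γ β) by abel, map_add,
        LinearMap.add_apply, hγorth α w hw, hγorth β w hw, add_zero]
  map_smul a α := eq_of_sub_orthogonal hB (hγW _) (W.smul_mem a (hγW α)) (hγorth _)
    fun w hw => by
      rw [← smul_sub, map_smul, LinearMap.smul_apply, hγorth α w hw, smul_zero]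

end LinearMap.BilinForm

section DualInner

variable {E : Type*} [NormedAddCommGroup E] [InnerProductSpace ℝ E] [FiniteDimensional ℝ E]

noncomputable def dualInnerForm : LinearMap.BilinForm ℝ (E →L[ℝ] ℝ) :=
  LinearMap.mk₂ ℝ dualInner (fun _ _ _ => by simp [dualInner, inner_add_left])
    (fun _ _ _ => by simp [dualInner, real_inner_smul_left])
    (fun _ _ _ => by simp [dualInner, inner_add_right])
    (fun _ _ _ => by simp [dualInner])

theorem dualInner_self_eq_zero {α : E →L[ℝ] ℝ} : dualInner α α = 0 ↔ α = 0 := by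
  simp [dualInner]

end DualInner

section EdenBracket

variable {E : Type*} [NormedAddCommGroup E] [InnerProductSpace ℝ E] [FiniteDimensional ℝ E]
  {W : Submodule ℝ (E →L[ℝ] ℝ)} {γ : (E →L[ℝ] ℝ) → (E →L[ℝ] ℝ)} {hγW : ∀ α, γ α ∈ W}
  {XF : (E × (E →L[ℝ] ℝ) → ℝ) → E × (E →L[ℝ] ℝ) → E × (E →L[ℝ] ℝ)}

def gammaPullback (hγW : ∀ α, γ α ∈ W) (f : E × ↥W → ℝ) : E × (E →L[ℝ] ℝ) → ℝ :=
  fun x => f (x.1, ⟨γ x.2, hγW x.2⟩)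

theorem differentiable_gammaPullback (hγ : IsLinearMap ℝ γ) {f : E × ↥W → ℝ}
    (hf : Differentiable ℝ f) : Differentiable ℝ (gammaPullback hγW f) := by
  let L : (E →L[ℝ] ℝ) →L[ℝ] (E →L[ℝ] ℝ) := LinearMap.toContinuousLinearMap (hγ.mk' γ)
  let P : (E →L[ℝ] ℝ) →L[ℝ] W := L.codRestrict W hγW
  have hP : gammaPullback hγW f = f ∘ fun x => (x.1, P x.2) := rfl
  rw [hP]
  exact hf.comp (by fun_prop)

theorem edenBracket_swap (f g : E × ↥W → ℝ) (m : E × ↥W) :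
    edenBracket E W γ hγW XF g f m = - edenBracket E W γ hγW XF f g m := by
  simp only [edenBracket, canOmega]
  ring

variable (hXF : ∀ (F : E × (E →L[ℝ] ℝ) → ℝ) (x : E × (E →L[ℝ] ℝ)), DifferentiableAt ℝ F x →
      ∀ u, canOmega E (XF F x) u = fderiv ℝ F x u)
include hXF

theorem edenBracket_eq_fderiv {f : E × ↥W → ℝ} (g : E × ↥W → ℝ) {m : E × ↥W}
    (hf : DifferentiableAt ℝ (gammaPullback hγW f) (m.1, ↑m.2)) :
    edenBracket E W γ hγW XF f g m =
      fderiv ℝ (gammaPullback hγW f) (m.1, ↑m.2) (XF (gammaPullback hγW g) (m.1, ↑m.2)) :=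
  hXF _ _ hf _

theorem edenBracket_linear_left (a b : ℝ) {f f' : E × ↥W → ℝ} (g : E × ↥W → ℝ) {m : E × ↥W}
    (hf : DifferentiableAt ℝ (gammaPullback hγW f) (m.1, ↑m.2))
    (hf' : DifferentiableAt ℝ (gammaPullback hγW f') (m.1, ↑m.2)) :
    edenBracket E W γ hγW XF (fun x => a * f x + b * f' x) g m =
      a * edenBracket E W γ hγW XF f g m + b * edenBracket E W γ hγW XF f' g m := by
  have hsum : gammaPullback hγW (fun x => a * f x + b * f' x) =
      fun x => a * gammaPullback hγW f x + b * gammaPullback hγW f' x := rfl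
  have hdiff : DifferentiableAt ℝ (gammaPullback hγW (fun x => a * f x + b * f' x)) (m.1, ↑m.2) := by
    rw [hsum]; exact (hf.const_mul a).add (hf'.const_mul b)
  rw [edenBracket_eq_fderiv hXF g hdiff, edenBracket_eq_fderiv hXF g hf,
    edenBracket_eq_fderiv hXF g hf', hsum, fderiv_fun_add (hf.const_mul a) (hf'.const_mul b),
    fderiv_const_mul hf a, fderiv_const_mul hf' b]
  simp

theorem edenBracket_linear_right (a b : ℝ) {f f' : E × ↥W → ℝ} (g : E × ↥W → ℝ) {m : E × ↥W}
    (hf : DifferentiableAt ℝ (gammaPullback hγW f) (m.1, ↑m.2))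
    (hf' : DifferentiableAt ℝ (gammaPullback hγW f') (m.1, ↑m.2)) :
    edenBracket E W γ hγW XF g (fun x => a * f x + b * f' x) m =
      a * edenBracket E W γ hγW XF g f m + b * edenBracket E W γ hγW XF g f' m := by
  rw [edenBracket_swap, edenBracket_linear_left hXF a b g hf hf', edenBracket_swap f,
    edenBracket_swap f']
  ring

theorem edenBracket_mul_left (hfix : ∀ w : W, γ w = w) {f f' : E × ↥W → ℝ}
    (g : E × ↥W → ℝ) {m : E × ↥W}
    (hf : DifferentiableAt ℝ (gammaPullback hγW f) (m.1, ↑m.2))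
    (hf' : DifferentiableAt ℝ (gammaPullback hγW f') (m.1, ↑m.2)) :
    edenBracket E W γ hγW XF (fun x => f x * f' x) g m =
      f m * edenBracket E W γ hγW XF f' g m + f' m * edenBracket E W γ hγW XF f g m := by
  have hprod : gammaPullback hγW (fun x => f x * f' x) =
      fun x => gammaPullback hγW f x * gammaPullback hγW f' x := rfl
  have hdiff : DifferentiableAt ℝ (gammaPullback hγW (fun x => f x * f' x)) (m.1, ↑m.2) := by
    rw [hprod]; exact hf.mul hf'
  have hm : ∀ h : E × ↥W → ℝ, gammaPullback hγW h (m.1, ↑m.2) = h m := fun h => by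
    simp only [gammaPullback, hfix]
  rw [edenBracket_eq_fderiv hXF g hdiff, edenBracket_eq_fderiv hXF g hf,
    edenBracket_eq_fderiv hXF g hf', hprod, fderiv_fun_mul hf hf', hm f, hm f']
  simp

end EdenBracket

theorem eden_bracket_is_almost_poisson_general
    (E : Type*) [NormedAddCommGroup E] [InnerProductSpace ℝ E] [FiniteDimensional ℝ E]
    (W : Submodule ℝ (E →L[ℝ] ℝ))
    -- `γ` is the orthogonal projection of `E*` onto `W` w.r.t. the dual inner product:
    (γ : (E →L[ℝ] ℝ) → (E →L[ℝ] ℝ))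
    (hγW : ∀ α, γ α ∈ W)
    (hγorth : ∀ α, ∀ w ∈ W, dualInner (α - γ α) w = 0)
    -- `X_F(x)` is the (unique) Hamiltonian vector of `F` at `x`:
    (XF : (E × (E →L[ℝ] ℝ) → ℝ) → E × (E →L[ℝ] ℝ) → E × (E →L[ℝ] ℝ))
    (hXF : ∀ (F : E × (E →L[ℝ] ℝ) → ℝ) (x : E × (E →L[ℝ] ℝ)), DifferentiableAt ℝ F x →
      ∀ u, canOmega E (XF F x) u = fderiv ℝ F x u) :
    -- ℝ-bilinearity:
    (∀ (a b : ℝ) (f f' g : E × ↥W → ℝ),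
      ContDiff ℝ (⊤ : ℕ∞) f → ContDiff ℝ (⊤ : ℕ∞) f' → ContDiff ℝ (⊤ : ℕ∞) g → ∀ m : E × ↥W,
        edenBracket E W γ hγW XF (fun x => a * f x + b * f' x) g m =
          a * edenBracket E W γ hγW XF f g m + b * edenBracket E W γ hγW XF f' g m ∧
        edenBracket E W γ hγW XF g (fun x => a * f x + b * f' x) m =
          a * edenBracket E W γ hγW XF g f m + b * edenBracket E W γ hγW XF g f' m) ∧
    -- skew-symmetry:
    (∀ f g : E × ↥W → ℝ, ContDiff ℝ (⊤ : ℕ∞) f → ContDiff ℝ (⊤ : ℕ∞) g → ∀ m : E × ↥W,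
      edenBracket E W γ hγW XF g f m = - edenBracket E W γ hγW XF f g m) ∧
    -- Leibniz rule:
    (∀ f f' g : E × ↥W → ℝ,
      ContDiff ℝ (⊤ : ℕ∞) f → ContDiff ℝ (⊤ : ℕ∞) f' → ContDiff ℝ (⊤ : ℕ∞) g → ∀ m : E × ↥W,
        edenBracket E W γ hγW XF (fun x => f x * f' x) g m =
          f m * edenBracket E W γ hγW XF f' g m +
            f' m * edenBracket E W γ hγW XF f g m) := by
  have hB : ∀ α : E →L[ℝ] ℝ, dualInnerForm α α = 0 → α = 0 := fun _ =>
    dualInner_self_eq_zero.mp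
  have hγlin : IsLinearMap ℝ γ :=
    LinearMap.BilinForm.isLinearMap_of_orthogonal (B := dualInnerForm) hB hγW hγorth
  have hfix : ∀ w : W, γ w = w := fun w =>
    LinearMap.BilinForm.apply_eq_self_of_orthogonal (B := dualInnerForm) hB hγW hγorth w.2
  have hdiff : ∀ f : E × ↥W → ℝ, ContDiff ℝ (⊤ : ℕ∞) f → ∀ x,
      DifferentiableAt ℝ (gammaPullback hγW f) x := fun f hf x =>
    (differentiable_gammaPullback hγlin (hf.differentiable (by simp))) x
  refine ⟨fun a b f f' g hf hf' _ m => ⟨?_, ?_⟩, fun f g _ _ m => edenBracket_swap f g m,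
    fun f f' g hf hf' _ m => edenBracket_mul_left hXF hfix g (hdiff f hf _) (hdiff f' hf' _)⟩
  · exact edenBracket_linear_left hXF a b g (hdiff f hf _) (hdiff f' hf' _)
  · exact edenBracket_linear_right hXF a b g (hdiff f hf _) (hdiff f' hf' _)

/-- The Eden bracket `{f,g}_E(m) := ω(X_{f∘Γ}(m), X_{g∘Γ}(m))` on `E × W` is
ℝ-bilinear, skew-symmetric and satisfies the Leibniz rule, i.e. it is an almost Poisson
bracket. -/
theorem eden_bracket_is_almost_poisson
    (E : Type*) [NormedAddCommGroup E] [InnerProductSpace ℝ E] [FiniteDimensional ℝ E]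
    (D : Submodule ℝ E)
    (W : Submodule ℝ (E →L[ℝ] ℝ))
    (hW : W = Submodule.map (InnerProductSpace.toDual ℝ E).toLinearEquiv.toLinearMap D)
    -- `γ` is the orthogonal projection of `E*` onto `W` w.r.t. the dual inner product:
    (γ : (E →L[ℝ] ℝ) → (E →L[ℝ] ℝ))
    (hγW : ∀ α, γ α ∈ W)
    (hγorth : ∀ α, ∀ w ∈ W, dualInner (α - γ α) w = 0)
    -- `X_F(x)` is the (unique) Hamiltonian vector of `F` at `x`:
    (XF : (E × (E →L[ℝ] ℝ) → ℝ) → E × (E →L[ℝ] ℝ) → E × (E →L[ℝ] ℝ))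
    (hXF : ∀ (F : E × (E →L[ℝ] ℝ) → ℝ) (x : E × (E →L[ℝ] ℝ)), DifferentiableAt ℝ F x →
      ∀ u, canOmega E (XF F x) u = fderiv ℝ F x u) :
    -- ℝ-bilinearity:
    (∀ (a b : ℝ) (f f' g : E × ↥W → ℝ),
      ContDiff ℝ (⊤ : ℕ∞) f → ContDiff ℝ (⊤ : ℕ∞) f' → ContDiff ℝ (⊤ : ℕ∞) g → ∀ m : E × ↥W,
        edenBracket E W γ hγW XF (fun x => a * f x + b * f' x) g m =
          a * edenBracket E W γ hγW XF f g m + b * edenBracket E W γ hγW XF f' g m ∧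
        edenBracket E W γ hγW XF g (fun x => a * f x + b * f' x) m =
          a * edenBracket E W γ hγW XF g f m + b * edenBracket E W γ hγW XF g f' m) ∧
    -- skew-symmetry:
    (∀ f g : E × ↥W → ℝ, ContDiff ℝ (⊤ : ℕ∞) f → ContDiff ℝ (⊤ : ℕ∞) g → ∀ m : E × ↥W,
      edenBracket E W γ hγW XF g f m = - edenBracket E W γ hγW XF f g m) ∧
    -- Leibniz rule:
    (∀ f f' g : E × ↥W → ℝ,
      ContDiff ℝ (⊤ : ℕ∞) f → ContDiff ℝ (⊤ : ℕ∞) f' → ContDiff ℝ (⊤ : ℕ∞) g → ∀ m : E × ↥W,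
        edenBracket E W γ hγW XF (fun x => f x * f' x) g m =
          f m * edenBracket E W γ hγW XF f' g m +
            f' m * edenBracket E W γ hγW XF f g m) :=
  eden_bracket_is_almost_poisson_general E W γ hγW hγorth XF hXF
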